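/- With the decomposition L(a,b) = f1(a) + f2(b) - h1(a)h2(b), the loss matrix L(C_s, C_t, T) with entries L_{jj'} = sum_{i,i'} L(c^s_{ij}, c^t_{i'j'}) T_{ii'} satisfies L(C_s, C_t, T) = f1(C_s)^T μ_s 1_n^T + 1_m μ_t^T f2(C_t) - h1(C_s)^T T h2(C_t), where f1, f2, h1, h2 are applied entrywise, provided T ∈ Π(μ_s, μ_t). -/
import Mathlib

def transportPolytope {m n : ℕ} (μ : Fin m → ℝ) (ν : Fin n → ℝ) :
    Set (Matrix (Fin m) (Fin n) ℝ) :=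
  {T | (∀ i j, 0 ≤ T i j) ∧ (∀ i, ∑ j, T i j = μ i) ∧ (∀ j, ∑ i, T i j = ν j)}

theorem gw_loss_matrix_decomposition {m n : ℕ}
    (f1 f2 h1 h2 : ℝ → ℝ)
    (Cs : Matrix (Fin m) (Fin m) ℝ) (Ct : Matrix (Fin n) (Fin n) ℝ)
    (μs : Fin m → ℝ) (μt : Fin n → ℝ)
    (T : Matrix (Fin m) (Fin n) ℝ) (hT : T ∈ transportPolytope μs μt) :
    ∀ j : Fin m, ∀ j' : Fin n,
      (∑ i, ∑ i',
        (f1 (Cs i j) + f2 (Ct i' j') - h1 (Cs i j) * h2 (Ct i' j')) * T i i')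
      = (∑ i, f1 (Cs i j) * μs i) + (∑ i', μt i' * f2 (Ct i' j'))
        - ∑ i, ∑ i', h1 (Cs i j) * T i i' * h2 (Ct i' j') := by
  obtain ⟨_, hrow, hcol⟩ := hT
  intro j j'
  have h1' : ∀ i, f1 (Cs i j) * μs i = ∑ i', f1 (Cs i j) * T i i' := by
    intro i; rw [← hrow i, Finset.mul_sum]
  have h2' : ∀ i', μt i' * f2 (Ct i' j') = ∑ i, f2 (Ct i' j') * T i i' := by
    intro i'; rw [← hcol i', Finset.sum_mul]; simp [mul_comm]
  simp_rw [h1', h2']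
  rw [show (∑ i', ∑ i, f2 (Ct i' j') * T i i') = ∑ i, ∑ i', f2 (Ct i' j') * T i i'
    from Finset.sum_comm]
  simp only [sub_mul, add_mul, Finset.sum_sub_distrib, Finset.sum_add_distrib,
    mul_right_comm]
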